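/- In a marked ∞-category where a marked arrow a : x → y of dimension n+1 admits a right inverse witness ν : a⁻¹ #_n a → 𝕀 (marked), where a⁻¹ itself admits a right inverse witness β : (a⁻¹)⁻¹ #_n a⁻¹ → 𝕀 (marked) and β has a marked inverse β⁻¹ : 𝕀 → (a⁻¹)⁻¹ #_n a⁻¹, then the composite ε := β ∘ ((a⁻¹)⁻¹ #_n ν #_n a⁻¹) ∘ (β⁻¹ #_n a #_n a⁻¹) : a #_n a⁻¹ → 𝕀 is a marked arrow, so that a⁻¹ is a two-sided inverse of a. -/
import Mathlib


/-- A single-sorted presentation of a strict ∞-category: a set of cells with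
dimension, source, target, identity and `k`-composition operations, subject to
the strict ∞-category (globular, unit, associativity, interchange) axioms.
Compositions are only meaningful for composable cells of equal dimension; the
axioms are stated accordingly. -/
structure StrictOmegaCat where
  Cell : Type
  dim : Cell → ℕ
  src : Cell → Cell
  tgt : Cell → Cell
  ident : Cell → Cell
  comp : ℕ → Cell → Cell → Cell
  dim_ident : ∀ x, dim (ident x) = dim x + 1
  src_ident : ∀ x, src (ident x) = x
  tgt_ident : ∀ x, tgt (ident x) = x
  dim_src : ∀ x, dim (src x) = dim x - 1
  dim_tgt : ∀ x, dim (tgt x) = dim x - 1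
  src_src : ∀ x, src (tgt x) = src (src x)
  tgt_tgt : ∀ x, tgt (src x) = tgt (tgt x)
  dim_comp : ∀ k x y, dim x = dim y → dim (comp k x y) = dim x
  src_comp : ∀ k x y, dim x = dim y → k + 1 = dim x → src (comp k x y) = src x
  tgt_comp : ∀ k x y, dim x = dim y → k + 1 = dim x → tgt (comp k x y) = tgt y
  src_comp' : ∀ k x y, dim x = dim y → k + 1 < dim x →
    src (comp k x y) = comp k (src x) (src y)
  tgt_comp' : ∀ k x y, dim x = dim y → k + 1 < dim x →
    tgt (comp k x y) = comp k (tgt x) (tgt y)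
  comp_ident_right : ∀ k x, k + 1 = dim x → comp k x (ident (tgt x)) = x
  comp_ident_left : ∀ k x, k + 1 = dim x → comp k (ident (src x)) x = x
  comp_assoc : ∀ k x y z, comp k (comp k x y) z = comp k x (comp k y z)
  interchange : ∀ k n x y z w, k < n →
    comp k (comp n x y) (comp n z w) = comp n (comp k x z) (comp k y w)

/-- `M` is an `m`-marking of `X` (for `m : ℕ∞`): it contains all identity
cells, all cells of dimension `> m`, and is closed under all compositions. -/
def IsMarking (X : StrictOmegaCat) (m : ℕ∞) (M : Set X.Cell) : Prop :=
  (∀ x, X.ident x ∈ M) ∧ (∀ x, m < (X.dim x : ℕ∞) → x ∈ M) ∧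
    (∀ k x y, x ∈ M → y ∈ M → X.comp k x y ∈ M)

/-- The saturation of a set of cells: the smallest `m`-marking containing it. -/
def saturation (X : StrictOmegaCat) (m : ℕ∞) (M : Set X.Cell) : Set X.Cell :=
  ⋂₀ {N | M ⊆ N ∧ IsMarking X m N}


/-- Let `a : x → y` be a marked `(n+1)`-arrow with a right
inverse witness `ν : a⁻¹ #ₙ a → 𝕀` (marked), where `a⁻¹` itself admits a
right inverse witness `β : (a⁻¹)⁻¹ #ₙ a⁻¹ → 𝕀` (marked) with a marked inverse
`β⁻¹ : 𝕀 → (a⁻¹)⁻¹ #ₙ a⁻¹`.  Then the composite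
`ε := β ∘ ((a⁻¹)⁻¹ #ₙ ν #ₙ a⁻¹) ∘ (β⁻¹ #ₙ a #ₙ a⁻¹) : a #ₙ a⁻¹ → 𝕀`
(whiskerings being compositions with identities) is a marked arrow with the
indicated source and target, so that `a⁻¹` is a two-sided inverse of `a`. -/
theorem twoSided_inverse (X : StrictOmegaCat) (M : Set X.Cell)
    (hid : ∀ x, X.ident x ∈ M)
    (hcomp : ∀ k x y, x ∈ M → y ∈ M → X.comp k x y ∈ M)
    (n : ℕ) (a ai aii ν β βi : X.Cell)
    (ha : a ∈ M) (hda : X.dim a = n + 1)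
    (hdai : X.dim ai = n + 1) (hsai : X.src ai = X.tgt a)
    (htai : X.tgt ai = X.src a)
    (hdaii : X.dim aii = n + 1) (hsaii : X.src aii = X.src a)
    (htaii : X.tgt aii = X.tgt a)
    (hν : ν ∈ M) (hdν : X.dim ν = n + 2)
    (hsν : X.src ν = X.comp n ai a) (htν : X.tgt ν = X.ident (X.tgt a))
    (hβ : β ∈ M) (hdβ : X.dim β = n + 2)
    (hsβ : X.src β = X.comp n aii ai) (htβ : X.tgt β = X.ident (X.src a))
    (hβi : βi ∈ M) (hdβi : X.dim βi = n + 2)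
    (hsβi : X.src βi = X.ident (X.src a))
    (htβi : X.tgt βi = X.comp n aii ai) :
    X.comp (n + 1)
        (X.comp (n + 1)
          (X.comp n (X.comp n βi (X.ident a)) (X.ident ai))
          (X.comp n (X.comp n (X.ident aii) ν) (X.ident ai)))
        β ∈ M ∧
    X.src (X.comp (n + 1)
        (X.comp (n + 1)
          (X.comp n (X.comp n βi (X.ident a)) (X.ident ai))
          (X.comp n (X.comp n (X.ident aii) ν) (X.ident ai)))
        β) = X.comp n a ai ∧
    X.tgt (X.comp (n + 1)
        (X.comp (n + 1)
          (X.comp n (X.comp n βi (X.ident a)) (X.ident ai))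
          (X.comp n (X.comp n (X.ident aii) ν) (X.ident ai)))
        β) = X.ident (X.src a) := by
  have hdia : X.dim (X.ident a) = n + 2 := by rw [X.dim_ident, hda]
  have hdiai : X.dim (X.ident ai) = n + 2 := by rw [X.dim_ident, hdai]
  have hdiaii : X.dim (X.ident aii) = n + 2 := by rw [X.dim_ident, hdaii]
  have hd1 : X.dim (X.comp n βi (X.ident a)) = n + 2 := by
    rw [X.dim_comp n _ _ (by rw [hdβi, hdia]), hdβi]
  have hdA : X.dim (X.comp n (X.comp n βi (X.ident a)) (X.ident ai)) = n + 2 := by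
    rw [X.dim_comp n _ _ (by rw [hd1, hdiai]), hd1]
  have hd2 : X.dim (X.comp n (X.ident aii) ν) = n + 2 := by
    rw [X.dim_comp n _ _ (by rw [hdiaii, hdν]), hdiaii]
  have hdB : X.dim (X.comp n (X.comp n (X.ident aii) ν) (X.ident ai)) = n + 2 := by
    rw [X.dim_comp n _ _ (by rw [hd2, hdiai]), hd2]
  have hdAB : X.dim (X.comp (n + 1)
      (X.comp n (X.comp n βi (X.ident a)) (X.ident ai))
      (X.comp n (X.comp n (X.ident aii) ν) (X.ident ai))) = n + 2 := by
    rw [X.dim_comp (n + 1) _ _ (by rw [hdA, hdB]), hdA]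
  refine ⟨?_, ?_, ?_⟩
  · exact hcomp _ _ _ (hcomp _ _ _
      (hcomp _ _ _ (hcomp _ _ _ hβi (hid a)) (hid ai))
      (hcomp _ _ _ (hcomp _ _ _ (hid aii) hν) (hid ai))) hβ
  · rw [X.src_comp (n + 1) _ _ (by rw [hdAB, hdβ]) (by rw [hdAB]),
      X.src_comp (n + 1) _ _ (by rw [hdA, hdB]) (by rw [hdA]),
      X.src_comp' n _ _ (by rw [hd1, hdiai]) (by rw [hd1]; omega),
      X.src_comp' n _ _ (by rw [hdβi, hdia]) (by rw [hdβi]; omega),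
      X.src_ident, X.src_ident, hsβi,
      X.comp_ident_left n a hda.symm]
  · rw [X.tgt_comp (n + 1) _ _ (by rw [hdAB, hdβ]) (by rw [hdAB]), htβ]
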